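/- Let λ ∈ ℝᵏ and let g_1, …, g_k be independent random variables each with the standard Gumbel distribution, i.e., the distribution on ℝ with cumulative distribution function F(x) = exp(−exp(−x)) (equivalently, density exp(−x − exp(−x)) with respect to Lebesgue measure). Then for every j ∈ {1, …, k}, the probability that λ_j + g_j is the unique maximum of (λ_1 + g_1, …, λ_k + g_k) equals the softmax of λ at j: P(λ_j + g_j > λ_i + g_i for all i ≠ j) = exp(λ_j) / Σ_{i=1}^k exp(λ_i). In particular, argmax_i(λ_i + g_i) is a categorical random variable with category probabilities softmax(λ), so λ represents the un-normalized log probabilities of the categories. -/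

import Mathlib

/-!
Conditionally on `g j = t`, the index `j` wins iff `g i < lam j - lam i + t` for every `i ≠ j`;
by independence this has probability `∏ F(lam j - lam i + t) = exp (-c e^{-t})` with
`c = ∑_{i ≠ j} exp (lam i - lam j)`. The substitution `u = e^{-t}` turns the Gumbel law into
the exponential law, so integrating over `t` gives `∫₀^∞ e^{-u} e^{-cu} du = 1 / (1 + c)`,
which is the softmax of `lam` at `j`.
-/

open MeasureTheory ProbabilityTheory
open scoped NNReal ENNReal BigOperators

/-- The standard Gumbel distribution on `ℝ`, with cumulative distribution function
`F(x) = exp(−exp(−x))`, given here by its density `exp(−x − exp(−x))` with respect to Lebesgue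
measure. -/
noncomputable def stdGumbel : Measure ℝ :=
  MeasureTheory.volume.withDensity fun x => ENNReal.ofReal (Real.exp (-x - Real.exp (-x)))

open Set Real

lemma lintegral_Ioi_exp_neg_mul {b : ℝ} (hb : 0 < b) (c : ℝ) :
    ∫⁻ u in Ioi c, ENNReal.ofReal (exp (-(b * u))) = ENNReal.ofReal (exp (-(b * c)) / b) := by
  have hint : IntegrableOn (fun u => exp (-b * u)) (Ioi c) :=
    integrableOn_exp_mul_Ioi (by linarith) c
  simp_rw [← neg_mul]
  rw [← ofReal_integral_eq_lintegral_ofReal hint (ae_of_all _ fun u => (exp_pos _).le),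
    integral_exp_mul_Ioi (by linarith), neg_div_neg_eq]

lemma image_exp_neg_Iio (a : ℝ) : (fun t => exp (-t)) '' Iio a = Ioi (exp (-a)) := by
  rw [← Set.image_image exp Neg.neg, image_neg_Iio, image_exp_Ioi]

lemma range_exp_neg : (Set.range fun t => exp (-t)) = Ioi 0 :=
  (neg_surjective.range_comp exp).trans range_exp

lemma setLIntegral_stdGumbel_comp_exp_neg {s : Set ℝ} (hs : MeasurableSet s) {f : ℝ → ℝ≥0∞}
    (hf : Measurable f) :
    ∫⁻ t in s, f (exp (-t)) ∂stdGumbel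
      = ∫⁻ u in (fun t => exp (-t)) '' s, ENNReal.ofReal (exp (-u)) * f u := by
  rw [lintegral_image_eq_lintegral_abs_deriv_mul hs
      (fun t _ => ((hasDerivAt_neg t).exp).hasDerivWithinAt)
      (fun x _ y _ h => neg_injective (exp_injective h)),
    stdGumbel, setLIntegral_withDensity_eq_setLIntegral_mul _ (by fun_prop) (by fun_prop) hs]
  refine setLIntegral_congr_fun hs fun t _ => ?_
  rw [Pi.mul_apply, mul_neg_one, abs_neg, abs_of_pos (exp_pos _), ← mul_assoc,
    ← ENNReal.ofReal_mul (exp_pos _).le, ← exp_add, sub_eq_add_neg]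

lemma stdGumbel_Iio (a : ℝ) : stdGumbel (Iio a) = ENNReal.ofReal (exp (-exp (-a))) := by
  have h := setLIntegral_stdGumbel_comp_exp_neg (measurableSet_Iio (a := a)) measurable_one
  simp only [Pi.one_apply, mul_one, setLIntegral_one, image_exp_neg_Iio] at h
  rw [h]
  simpa using lintegral_Ioi_exp_neg_mul one_pos (exp (-a))

instance : IsProbabilityMeasure stdGumbel := by
  constructor
  have h := setLIntegral_stdGumbel_comp_exp_neg MeasurableSet.univ measurable_one
  simp only [Pi.one_apply, mul_one, image_univ, range_exp_neg, Measure.restrict_univ] at h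
  rw [← lintegral_one, h]
  simpa using lintegral_Ioi_exp_neg_mul one_pos 0

lemma lintegral_stdGumbel_exp_neg_mul_exp_neg {c : ℝ} (hc : 0 ≤ c) :
    ∫⁻ t, ENNReal.ofReal (exp (-(c * exp (-t)))) ∂stdGumbel = ENNReal.ofReal (1 / (1 + c)) := by
  have h := setLIntegral_stdGumbel_comp_exp_neg MeasurableSet.univ
    (f := fun u => ENNReal.ofReal (exp (-(c * u)))) (by fun_prop)
  rw [Measure.restrict_univ, image_univ, range_exp_neg] at h
  rw [h]
  convert lintegral_Ioi_exp_neg_mul (by linarith : 0 < 1 + c) 0 using 3 with u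
  · rw [← ENNReal.ofReal_mul (exp_pos _).le, ← exp_add]
    ring_nf
  · simp

lemma prod_stdGumbel_Iio_add {ι : Type*} (s : Finset ι) (a : ι → ℝ) (t : ℝ) :
    ∏ i ∈ s, stdGumbel (Iio (a i + t))
      = ENNReal.ofReal (exp (-((∑ i ∈ s, exp (-a i)) * exp (-t)))) := by
  simp_rw [stdGumbel_Iio, ← ENNReal.ofReal_prod_of_nonneg fun _ _ => (exp_pos _).le, ← exp_sum,
    Finset.sum_mul, ← Finset.sum_neg_distrib, ← exp_add, neg_add]

lemma measurableSet_setOf_forall_ne_add_lt {ι : Type*} [Countable ι] (lam : ι → ℝ) (j : ι) :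
    MeasurableSet {x : ι → ℝ | ∀ i, i ≠ j → lam i + x i < lam j + x j} := by
  simp only [ofPred_forall]
  exact .iInter fun i => .iInter fun _ => measurableSet_lt (by fun_prop) (by fun_prop)

lemma pi_setOf_forall_ne_add_lt {n : ℕ} (μ : Fin (n + 1) → Measure ℝ) [∀ i, SigmaFinite (μ i)]
    (lam : Fin (n + 1) → ℝ) (j : Fin (n + 1)) :
    Measure.pi μ {x | ∀ i, i ≠ j → lam i + x i < lam j + x j}
      = ∫⁻ t, ∏ i : Fin n, μ (j.succAbove i) (Iio (lam j - lam (j.succAbove i) + t)) ∂μ j := by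
  have e := (measurePreserving_piFinSuccAbove μ j).symm
  rw [← e.measure_preimage_equiv,
    Measure.prod_apply (e.measurable (measurableSet_setOf_forall_ne_add_lt lam j))]
  refine lintegral_congr fun t => ?_
  rw [← Measure.pi_pi]
  congr 1
  ext y
  simp only [MeasurableEquiv.piFinSuccAbove_symm_apply, ne_eq, Fin.forall_iff_succAbove j,
    not_true_eq_false, lt_self_iff_false, imp_self, Fin.succAbove_ne, not_false_eq_true,
    forall_const, true_and, preimage_ofPred_eq, Fin.insertNthEquiv_apply,
    Fin.insertNth_apply_succAbove, Fin.insertNth_apply_same, mem_ofPred_eq, mem_pi, mem_univ,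
    mem_Iio, sub_add_eq_add_sub, lt_sub_iff_add_lt']

lemma exp_div_sum_exp_eq_one_div {n : ℕ} (lam : Fin (n + 1) → ℝ) (j : Fin (n + 1)) :
    exp (lam j) / ∑ i, exp (lam i)
      = 1 / (1 + ∑ i : Fin n, exp (-(lam j - lam (j.succAbove i)))) := by
  rw [Fin.sum_univ_succAbove _ j, div_eq_div_iff (by positivity) (by positivity), one_mul,
    mul_add, mul_one, Finset.mul_sum]
  simp_rw [← exp_add]
  ring_nf

theorem gumbel_max_trick_general
    {k : ℕ}
    {Ω : Type*} [MeasureSpace Ω] [IsProbabilityMeasure (ℙ : Measure Ω)]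
    (lam : Fin k → ℝ) (g : Fin k → Ω → ℝ)
    (hindep : iIndepFun g ℙ)
    (hlaw : ∀ i, Measure.map (g i) ℙ = stdGumbel) :
    ∀ j : Fin k,
      ℙ {ω | ∀ i, i ≠ j → lam i + g i ω < lam j + g j ω}
        = ENNReal.ofReal (Real.exp (lam j) / ∑ i, Real.exp (lam i)) := by
  intro j
  cases k with
  | zero => exact j.elim0
  | succ n =>
  have hg (i : Fin (n + 1)) : AEMeasurable (g i) :=
    .of_map_ne_zero (by simp [hlaw i, IsProbabilityMeasure.ne_zero])
  have hjoint : (ℙ : Measure Ω).map (fun ω i => g i ω) = Measure.pi fun _ => stdGumbel := by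
    simp_rw [hindep.map_fun_eq_pi_map hg, hlaw]
  calc ℙ {ω | ∀ i, i ≠ j → lam i + g i ω < lam j + g j ω}
      = (Measure.pi fun _ => stdGumbel) {x | ∀ i, i ≠ j → lam i + x i < lam j + x j} := by
        rw [← hjoint, Measure.map_apply_of_aemeasurable (aemeasurable_pi_lambda _ hg)
          (measurableSet_setOf_forall_ne_add_lt lam j)]
        rfl
    _ = ∫⁻ t, ENNReal.ofReal (exp (-((∑ i : Fin n, exp (-(lam j - lam (j.succAbove i))))
          * exp (-t)))) ∂stdGumbel := by
        simp_rw [pi_setOf_forall_ne_add_lt, prod_stdGumbel_Iio_add]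
    _ = _ := by
        rw [lintegral_stdGumbel_exp_neg_mul_exp_neg (by positivity), exp_div_sum_exp_eq_one_div]

/-- The Gumbel-max trick: if `g 1, …, g k` are independent standard Gumbel random variables and
`lam ∈ ℝᵏ`, then for every `j`, the probability that `lam j + g j` is the unique maximum of
`(lam 1 + g 1, …, lam k + g k)` equals the softmax of `lam` at `j`, namely
`exp(lam j) / ∑ i, exp(lam i)`; hence the argmax is a categorical random variable with category
probabilities `softmax lam`, so `lam` represents the un-normalized log probabilities of the
categories. -/
theorem gumbel_max_trick
    {k : ℕ} (hk : 0 < k)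
    {Ω : Type*} [MeasureSpace Ω] [IsProbabilityMeasure (ℙ : Measure Ω)]
    (lam : Fin k → ℝ) (g : Fin k → Ω → ℝ)
    (hmeas : ∀ i, Measurable (g i))
    (hindep : iIndepFun g ℙ)
    (hlaw : ∀ i, Measure.map (g i) ℙ = stdGumbel) :
    ∀ j : Fin k,
      ℙ {ω | ∀ i, i ≠ j → lam i + g i ω < lam j + g j ω}
        = ENNReal.ofReal (Real.exp (lam j) / ∑ i, Real.exp (lam i)) :=
  gumbel_max_trick_general lam g hindep hlaw
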